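/- arXiv:2310.14064 — 2 statements merged into one kernel-verified Lean document; each statement's English description precedes it below -/
import Mathlib

section
/- With notation as in the DR setup, suppose the pseudo-outcome uses an arbitrary (X,Z)-measurable estimate μ̂ in place of μ but the true conditional propensity π: R := 1{T=a1}·Y + 1{T≠a1}·[ (1{T=a3}/π(X,Z))·(Y_{a1} − μ̂(X,Z)) + μ̂(X,Z) ]. Then E[R | X] = E[Y_{a1} | X] almost surely. -/
open MeasureTheory

/-- First half of double robustness: the DR pseudo-outcome with an arbitrary
`(X,Z)`-measurable outcome-regression estimate `μ̂` in place of the true `μ`, but the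
true conditional propensity `π`, remains unbiased: `E[R | X] = E[Y_{a1} | X]` a.s. -/
theorem dr_pseudo_outcome_unbiased_misspecified_outcome
    {Ω : Type*} (mX mXZ : MeasurableSpace Ω) [m0 : MeasurableSpace Ω] (μ : Measure Ω) [IsProbabilityMeasure μ]
    (hXXZ : mX ≤ mXZ) (hXZ : mXZ ≤ m0)
    (T1 T3 : Set Ω) (hT1 : MeasurableSet T1) (hT3 : MeasurableSet T3)
    (hdisj : Disjoint T1 T3)
    (Y Y1 muhat : Ω → ℝ) (hY1 : Integrable Y1 μ) (hmuhat : Integrable muhat μ)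
    (hmuhatm : StronglyMeasurable[mXZ] muhat)
    (pi : Ω → ℝ) (hpim : StronglyMeasurable[mXZ] pi)
    (ε : ℝ) (hε : 0 < ε) (hpos : ∀ᵐ ω ∂μ, ε ≤ pi ω ∧ pi ω ≤ 1)
    -- π is the true conditional propensity P(T = a3 | X, Z, T ≠ a1)
    (hpidef : (μ[Set.indicator T3 (fun _ => (1 : ℝ)) | mXZ])
        =ᵐ[μ] fun ω => pi ω * (μ[Set.indicator T1ᶜ (fun _ => (1 : ℝ)) | mXZ]) ω)
    -- consistency: Y = Y_{a1} on {T = a1}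
    (hcons : ∀ᵐ ω ∂μ, ω ∈ T1 → Y ω = Y1 ω)
    -- training ignorability: Y_{a1} ⟂ T | (X,Z)
    (hig1 : (μ[fun ω => Set.indicator T1 (fun _ => (1 : ℝ)) ω * Y1 ω | mXZ])
        =ᵐ[μ] fun ω =>
          (μ[Set.indicator T1 (fun _ => (1 : ℝ)) | mXZ]) ω * (μ[Y1 | mXZ]) ω)
    (hig3 : (μ[fun ω => Set.indicator T3 (fun _ => (1 : ℝ)) ω * Y1 ω | mXZ])
        =ᵐ[μ] fun ω =>
          (μ[Set.indicator T3 (fun _ => (1 : ℝ)) | mXZ]) ω * (μ[Y1 | mXZ]) ω)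
    (hR : Integrable (fun ω =>
      Set.indicator T1 (fun _ => (1 : ℝ)) ω * Y ω +
        Set.indicator T1ᶜ (fun _ => (1 : ℝ)) ω *
          ((Set.indicator T3 (fun _ => (1 : ℝ)) ω / pi ω) * (Y1 ω - muhat ω) +
            muhat ω)) μ) :
    (μ[fun ω =>
      Set.indicator T1 (fun _ => (1 : ℝ)) ω * Y ω +
        Set.indicator T1ᶜ (fun _ => (1 : ℝ)) ω *
          ((Set.indicator T3 (fun _ => (1 : ℝ)) ω / pi ω) * (Y1 ω - muhat ω) +
            muhat ω) | mX])
      =ᵐ[μ] μ[Y1 | mX] := by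
  classical
  set i1 : Ω → ℝ := Set.indicator T1 (fun _ => (1 : ℝ)) with hi1def
  set i1c : Ω → ℝ := Set.indicator T1ᶜ (fun _ => (1 : ℝ)) with hi1cdef
  set i3 : Ω → ℝ := Set.indicator T3 (fun _ => (1 : ℝ)) with hi3def
  -- measurability facts
  have hT1' : MeasurableSet[m0] T1 := hT1
  have hT3' : MeasurableSet[m0] T3 := hT3
  have hi1m : Measurable[m0] i1 := measurable_const.indicator hT1'
  have hi1cm : Measurable[m0] i1c := measurable_const.indicator hT1'.compl
  have hi3m : Measurable[m0] i3 := measurable_const.indicator hT3'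
  have hpim0 : Measurable[m0] pi := fun s hs => hXZ _ (hpim.measurable hs)
  have hmuhat0 : Measurable[m0] muhat := fun s hs => hXZ _ (hmuhatm.measurable hs)
  have hpiinvm : StronglyMeasurable[mXZ] (fun ω => (pi ω)⁻¹) :=
    (hpim.measurable.inv).stronglyMeasurable
  have hY1ae := hY1.aestronglyMeasurable
  have hmuae := hmuhat.aestronglyMeasurable
  -- a.e. bounds on pi
  have hpib : ∀ᵐ ω ∂μ, 0 < pi ω ∧ (pi ω)⁻¹ ≤ ε⁻¹ := by
    filter_upwards [hpos] with ω h
    have h0 : 0 < pi ω := lt_of_lt_of_le hε h.1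
    exact ⟨h0, inv_anti₀ hε h.1⟩
  -- indicator bounds
  have habs1 : ∀ ω, |i1 ω| ≤ 1 := by
    intro ω; by_cases h : ω ∈ T1 <;> simp [hi1def, Set.indicator_apply, h]
  have habs1c : ∀ ω, |i1c ω| ≤ 1 := by
    intro ω; by_cases h : ω ∈ T1ᶜ <;> simp [hi1cdef, Set.indicator_apply, h]
  have habs3 : ∀ ω, |i3 ω| ≤ 1 := by
    intro ω; by_cases h : ω ∈ T3 <;> simp [hi3def, Set.indicator_apply, h]
  -- integrability of the four pieces
  have hf1 : Integrable (fun ω => i1 ω * Y1 ω) μ := by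
    have hm : AEStronglyMeasurable[m0] (fun ω => i1 ω * Y1 ω) μ := by
      exact (hi1m.aestronglyMeasurable (μ := μ)).mul hY1ae
    refine hY1.norm.mono' hm ?_
    filter_upwards with ω
    rw [Real.norm_eq_abs, abs_mul]
    calc |i1 ω| * |Y1 ω| ≤ 1 * |Y1 ω| :=
          mul_le_mul_of_nonneg_right (habs1 ω) (abs_nonneg _)
      _ = ‖Y1 ω‖ := by rw [one_mul, Real.norm_eq_abs]
  have hiY3 : Integrable (fun ω => i3 ω * Y1 ω) μ := by
    have hm : AEStronglyMeasurable[m0] (fun ω => i3 ω * Y1 ω) μ := by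
      exact (hi3m.aestronglyMeasurable (μ := μ)).mul hY1ae
    refine hY1.norm.mono' hm ?_
    filter_upwards with ω
    rw [Real.norm_eq_abs, abs_mul]
    calc |i3 ω| * |Y1 ω| ≤ 1 * |Y1 ω| :=
          mul_le_mul_of_nonneg_right (habs3 ω) (abs_nonneg _)
      _ = ‖Y1 ω‖ := by rw [one_mul, Real.norm_eq_abs]
  have hf2 : Integrable (fun ω => (pi ω)⁻¹ * (i3 ω * Y1 ω)) μ := by
    have hm : AEStronglyMeasurable[m0] (fun ω => (pi ω)⁻¹ * (i3 ω * Y1 ω)) μ := by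
      exact (hpim0.inv.aestronglyMeasurable (μ := μ)).mul
        ((hi3m.aestronglyMeasurable (μ := μ)).mul hY1ae)
    refine (hY1.norm.const_mul ε⁻¹).mono' hm ?_
    filter_upwards [hpib] with ω hp
    rw [Real.norm_eq_abs, abs_mul, abs_mul]
    have h1 : |(pi ω)⁻¹| ≤ ε⁻¹ := by
      rw [abs_of_nonneg (inv_nonneg.mpr hp.1.le)]; exact hp.2
    calc |(pi ω)⁻¹| * (|i3 ω| * |Y1 ω|) ≤ ε⁻¹ * (1 * |Y1 ω|) := by
          apply mul_le_mul h1 (mul_le_mul_of_nonneg_right (habs3 ω) (abs_nonneg _))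
            (by positivity) (by positivity)
      _ = ε⁻¹ * ‖Y1 ω‖ := by rw [one_mul, Real.norm_eq_abs]
  have hf3 : Integrable (fun ω => -(muhat ω * (pi ω)⁻¹) * i3 ω) μ := by
    have hm : AEStronglyMeasurable[m0] (fun ω => -(muhat ω * (pi ω)⁻¹) * i3 ω) μ := by
      exact ((hmuhat0.mul hpim0.inv).neg.aestronglyMeasurable (μ := μ)).mul
        (hi3m.aestronglyMeasurable (μ := μ))
    refine (hmuhat.norm.const_mul ε⁻¹).mono' hm ?_
    filter_upwards [hpib] with ω hp
    rw [Real.norm_eq_abs, abs_mul, abs_neg, abs_mul]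
    have h1 : |(pi ω)⁻¹| ≤ ε⁻¹ := by
      rw [abs_of_nonneg (inv_nonneg.mpr hp.1.le)]; exact hp.2
    calc |muhat ω| * |(pi ω)⁻¹| * |i3 ω| ≤ |muhat ω| * ε⁻¹ * 1 := by
          apply mul_le_mul (mul_le_mul_of_nonneg_left h1 (abs_nonneg _)) (habs3 ω)
            (abs_nonneg _) (by positivity)
      _ = ε⁻¹ * ‖muhat ω‖ := by rw [mul_one, Real.norm_eq_abs, mul_comm]
  have hf4 : Integrable (fun ω => muhat ω * i1c ω) μ := by
    have hm : AEStronglyMeasurable[m0] (fun ω => muhat ω * i1c ω) μ := by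
      exact hmuae.mul (hi1cm.aestronglyMeasurable (μ := μ))
    refine hmuhat.norm.mono' hm ?_
    filter_upwards with ω
    rw [Real.norm_eq_abs, abs_mul]
    calc |muhat ω| * |i1c ω| ≤ |muhat ω| * 1 :=
          mul_le_mul_of_nonneg_left (habs1c ω) (abs_nonneg _)
      _ = ‖muhat ω‖ := by rw [mul_one, Real.norm_eq_abs]
  have hi1int : Integrable i1 μ := by
    letI : MeasurableSpace Ω := m0
    exact Integrable.indicator (integrable_const (1 : ℝ)) hT1'
  have hi1cint : Integrable i1c μ := by
    letI : MeasurableSpace Ω := m0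
    exact Integrable.indicator (integrable_const (1 : ℝ)) hT1'.compl
  have hi3int : Integrable i3 μ := by
    letI : MeasurableSpace Ω := m0
    exact Integrable.indicator (integrable_const (1 : ℝ)) hT3'
  -- rewrite the pseudo-outcome a.e. as a sum of four pieces
  have key : (fun ω => i1 ω * Y ω + i1c ω * ((i3 ω / pi ω) * (Y1 ω - muhat ω) + muhat ω))
      =ᵐ[μ] (fun ω => i1 ω * Y1 ω + ((pi ω)⁻¹ * (i3 ω * Y1 ω)
          + (-(muhat ω * (pi ω)⁻¹) * i3 ω + muhat ω * i1c ω))) := by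
    filter_upwards [hcons] with ω hc
    by_cases h1 : ω ∈ T1
    · have h3 : ω ∉ T3 := fun h => (hdisj.ne_of_mem h1 h) rfl
      have h1c : ω ∉ T1ᶜ := by simpa using h1
      simp [hi1def, hi1cdef, hi3def, Set.indicator_of_mem h1, Set.indicator_of_notMem h3,
        Set.indicator_of_notMem h1c, hc h1]
    · have h1c : ω ∈ T1ᶜ := by simpa using h1
      simp only [hi1def, hi1cdef, hi3def, Set.indicator_of_notMem h1,
        Set.indicator_of_mem h1c]
      rw [div_eq_mul_inv]; ring
  -- conditional expectations of the pieces given mXZ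
  have hE2 : (μ[fun ω => (pi ω)⁻¹ * (i3 ω * Y1 ω) | mXZ])
      =ᵐ[μ] fun ω => (μ[i1c | mXZ]) ω * (μ[Y1 | mXZ]) ω := by
    have h : (μ[fun ω => (pi ω)⁻¹ * (i3 ω * Y1 ω) | mXZ])
        =ᵐ[μ] fun ω => (pi ω)⁻¹ * (μ[fun ω => i3 ω * Y1 ω | mXZ]) ω :=
      condExp_mul_of_stronglyMeasurable_left (μ := μ) hpiinvm hf2 hiY3
    filter_upwards [h, hig3, hpidef, hpib] with ω he h3 hp hb
    have hne : pi ω ≠ 0 := ne_of_gt hb.1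
    rw [he, h3, hp]
    field_simp
  have hE3 : (μ[fun ω => -(muhat ω * (pi ω)⁻¹) * i3 ω | mXZ])
      =ᵐ[μ] fun ω => -(muhat ω) * (μ[i1c | mXZ]) ω := by
    have hsm : StronglyMeasurable[mXZ] (fun ω => -(muhat ω * (pi ω)⁻¹)) :=
      (hmuhatm.mul hpiinvm).neg
    have h : (μ[fun ω => -(muhat ω * (pi ω)⁻¹) * i3 ω | mXZ])
        =ᵐ[μ] fun ω => -(muhat ω * (pi ω)⁻¹) * (μ[i3 | mXZ]) ω :=
      condExp_mul_of_stronglyMeasurable_left (μ := μ) hsm hf3 hi3int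
    filter_upwards [h, hpidef, hpib] with ω he hp hb
    have hne : pi ω ≠ 0 := ne_of_gt hb.1
    rw [he, hp]
    field_simp
  have hE4 : (μ[fun ω => muhat ω * i1c ω | mXZ])
      =ᵐ[μ] fun ω => muhat ω * (μ[i1c | mXZ]) ω := by
    exact condExp_mul_of_stronglyMeasurable_left (μ := μ) hmuhatm hf4 hi1cint
  -- the indicators sum to one
  have hone : (fun ω => (μ[i1 | mXZ]) ω + (μ[i1c | mXZ]) ω) =ᵐ[μ] fun _ => (1 : ℝ) := by
    have hadd : (μ[fun ω => i1 ω + i1c ω | mXZ])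
        =ᵐ[μ] fun ω => (μ[i1 | mXZ]) ω + (μ[i1c | mXZ]) ω :=
      condExp_add (μ := μ) (m := mXZ) hi1int hi1cint
    have hsum1 : (fun ω => i1 ω + i1c ω) = fun _ => (1 : ℝ) := by
      funext ω; by_cases h : ω ∈ T1 <;>
        simp [hi1def, hi1cdef, Set.indicator_apply, h]
    have hc : μ[fun _ : Ω => (1 : ℝ) | mXZ] = fun _ => (1 : ℝ) := condExp_const hXZ 1
    rw [hsum1, hc] at hadd
    exact hadd.symm
  -- conditional expectation of the sum at mXZ
  have hsum : (μ[fun ω => i1 ω * Y1 ω + ((pi ω)⁻¹ * (i3 ω * Y1 ω)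
        + (-(muhat ω * (pi ω)⁻¹) * i3 ω + muhat ω * i1c ω)) | mXZ])
      =ᵐ[μ] μ[Y1 | mXZ] := by
    have h34 : (μ[fun ω => -(muhat ω * (pi ω)⁻¹) * i3 ω + muhat ω * i1c ω | mXZ])
        =ᵐ[μ] fun ω => (μ[fun ω => -(muhat ω * (pi ω)⁻¹) * i3 ω | mXZ]) ω
          + (μ[fun ω => muhat ω * i1c ω | mXZ]) ω :=
      condExp_add (μ := μ) (m := mXZ) hf3 hf4
    have h234 : (μ[fun ω => (pi ω)⁻¹ * (i3 ω * Y1 ω)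
          + (-(muhat ω * (pi ω)⁻¹) * i3 ω + muhat ω * i1c ω) | mXZ])
        =ᵐ[μ] fun ω => (μ[fun ω => (pi ω)⁻¹ * (i3 ω * Y1 ω) | mXZ]) ω
          + (μ[fun ω => -(muhat ω * (pi ω)⁻¹) * i3 ω + muhat ω * i1c ω | mXZ]) ω :=
      condExp_add (μ := μ) (m := mXZ) hf2 (hf3.add hf4)
    have h1234 : (μ[fun ω => i1 ω * Y1 ω + ((pi ω)⁻¹ * (i3 ω * Y1 ω)
          + (-(muhat ω * (pi ω)⁻¹) * i3 ω + muhat ω * i1c ω)) | mXZ])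
        =ᵐ[μ] fun ω => (μ[fun ω => i1 ω * Y1 ω | mXZ]) ω
          + (μ[fun ω => (pi ω)⁻¹ * (i3 ω * Y1 ω)
              + (-(muhat ω * (pi ω)⁻¹) * i3 ω + muhat ω * i1c ω) | mXZ]) ω :=
      condExp_add (μ := μ) (m := mXZ) hf1 (hf2.add (hf3.add hf4))
    filter_upwards [h34, h234, h1234, hE2, hE3, hE4, hig1, hone] with ω e34 e234 e1234 e2 e3 e4 e1 eo
    have : (μ[fun ω => i1 ω * Y1 ω + ((pi ω)⁻¹ * (i3 ω * Y1 ω)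
        + (-(muhat ω * (pi ω)⁻¹) * i3 ω + muhat ω * i1c ω)) | mXZ]) ω
        = (μ[i1 | mXZ]) ω * (μ[Y1 | mXZ]) ω + ((μ[i1c | mXZ]) ω * (μ[Y1 | mXZ]) ω
          + (-(muhat ω) * (μ[i1c | mXZ]) ω + muhat ω * (μ[i1c | mXZ]) ω)) := by
      rw [e1234, e234, e34, e1, e2, e3, e4]
    rw [this]
    have heq : (μ[i1 | mXZ]) ω * (μ[Y1 | mXZ]) ω + ((μ[i1c | mXZ]) ω * (μ[Y1 | mXZ]) ω
          + (-(muhat ω) * (μ[i1c | mXZ]) ω + muhat ω * (μ[i1c | mXZ]) ω))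
        = ((μ[i1 | mXZ]) ω + (μ[i1c | mXZ]) ω) * (μ[Y1 | mXZ]) ω := by ring
    rw [heq, eo, one_mul]
  -- put everything together via the tower property
  calc (μ[fun ω => i1 ω * Y ω + i1c ω * ((i3 ω / pi ω) * (Y1 ω - muhat ω) + muhat ω) | mX])
      =ᵐ[μ] (μ[fun ω => i1 ω * Y1 ω + ((pi ω)⁻¹ * (i3 ω * Y1 ω)
          + (-(muhat ω * (pi ω)⁻¹) * i3 ω + muhat ω * i1c ω)) | mX]) := condExp_congr_ae key
    _ =ᵐ[μ] (μ[μ[fun ω => i1 ω * Y1 ω + ((pi ω)⁻¹ * (i3 ω * Y1 ω)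
          + (-(muhat ω * (pi ω)⁻¹) * i3 ω + muhat ω * i1c ω)) | mXZ] | mX]) :=
        (condExp_condExp_of_le hXXZ hXZ).symm
    _ =ᵐ[μ] (μ[μ[Y1 | mXZ] | mX]) := condExp_congr_ae hsum
    _ =ᵐ[μ] μ[Y1 | mX] := condExp_condExp_of_le hXXZ hXZ
end

section
/- Let Y₁ and ν̂(X) be square-integrable, and suppose Z-measurable error regressor η(X,Z) := E[(Ŷ − ν̂(X))^2 | X, Z, T = a3] exists, with conditional propensity π := P(T = a3 | X, Z, T ≠ a1) ∈ [ε,1] a.s. Define the DR evaluation functional φ := 1{T≠a1}·[ (1{T=a3}/π)·((Ŷ − ν̂(X))^2 − η(X,Z)) + η(X,Z) ] + 1{T=a1}·(Y − ν̂(X))^2. If consistency holds (Y = Y_{a1} on T = a1, Ŷ = Y_{a1} on T = a3 in distribution given (X,Z)) and (Y_{a1} − ν̂(X))^2 ⟂ T | (X,Z), then E[φ] = E[(Y_{a1} − ν̂(X))^2]. -/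
open MeasureTheory

/-- Unbiasedness of the doubly-robust MSE evaluation estimator (Method 3):
with consistency (`Y = Y_{a1}` on `{T = a1}`, `Ŷ = Y_{a1}` on `{T = a3}`),
positivity `ε ≤ π ≤ 1` for the conditional propensity
`π = P(T = a3 | X,Z, T ≠ a1)`, ignorability of the squared error
`S = (Y_{a1} − ν̂(X))²` and the treatment given `(X,Z)`, and the identifiable error
regressor `η(X,Z) = E[S | X,Z, T = a3]`, the DR evaluation functional
`φ = 1{T≠a1}·[(1{T=a3}/π)·((Ŷ − ν̂(X))² − η) + η] + 1{T=a1}·(Y − ν̂(X))²`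
satisfies `E[φ] = E[(Y_{a1} − ν̂(X))²]`. -/
theorem dr_evaluation_unbiased
    {Ω : Type*} (mXZ : MeasurableSpace Ω) [m0 : MeasurableSpace Ω] (μ : Measure Ω) [IsProbabilityMeasure μ]
    (hXZ : mXZ ≤ m0)
    (T1 T3 : Set Ω) (hT1 : MeasurableSet T1) (hT3 : MeasurableSet T3)
    (hdisj : Disjoint T1 T3)
    (Y Y1 Yhat nuX η pi : Ω → ℝ)
    (hnuXm : StronglyMeasurable[mXZ] nuX)
    (hηm : StronglyMeasurable[mXZ] η) (hpim : StronglyMeasurable[mXZ] pi)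
    (ε : ℝ) (hε : 0 < ε) (hpos : ∀ᵐ ω ∂μ, ε ≤ pi ω ∧ pi ω ≤ 1)
    -- π is the conditional propensity P(T = a3 | X,Z, T ≠ a1)
    (hpidef : (μ[Set.indicator T3 (fun _ => (1 : ℝ)) | mXZ])
        =ᵐ[μ] fun ω => pi ω * (μ[Set.indicator T1ᶜ (fun _ => (1 : ℝ)) | mXZ]) ω)
    -- consistency
    (hcons1 : ∀ᵐ ω ∂μ, ω ∈ T1 → Y ω = Y1 ω)
    (hcons3 : ∀ᵐ ω ∂μ, ω ∈ T3 → Yhat ω = Y1 ω)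
    -- η is the identifiable error regressor E[(Ŷ − ν̂(X))² | X,Z, T = a3]
    (hη : (μ[fun ω => Set.indicator T3 (fun _ => (1 : ℝ)) ω * (Yhat ω - nuX ω) ^ 2 | mXZ])
        =ᵐ[μ] fun ω => (μ[Set.indicator T3 (fun _ => (1 : ℝ)) | mXZ]) ω * η ω)
    -- ignorability: (Y_{a1} − ν̂(X))² ⟂ T | (X,Z)
    (hig1 : (μ[fun ω =>
          Set.indicator T1 (fun _ => (1 : ℝ)) ω * (Y1 ω - nuX ω) ^ 2 | mXZ])
        =ᵐ[μ] fun ω => (μ[Set.indicator T1 (fun _ => (1 : ℝ)) | mXZ]) ω *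
          (μ[fun ω => (Y1 ω - nuX ω) ^ 2 | mXZ]) ω)
    (hig3 : (μ[fun ω =>
          Set.indicator T3 (fun _ => (1 : ℝ)) ω * (Y1 ω - nuX ω) ^ 2 | mXZ])
        =ᵐ[μ] fun ω => (μ[Set.indicator T3 (fun _ => (1 : ℝ)) | mXZ]) ω *
          (μ[fun ω => (Y1 ω - nuX ω) ^ 2 | mXZ]) ω)
    (hS : Integrable (fun ω => (Y1 ω - nuX ω) ^ 2) μ)
    (hφ : Integrable (fun ω =>
      Set.indicator T1ᶜ (fun _ => (1 : ℝ)) ω *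
        ((Set.indicator T3 (fun _ => (1 : ℝ)) ω / pi ω) *
            ((Yhat ω - nuX ω) ^ 2 - η ω) + η ω) +
      Set.indicator T1 (fun _ => (1 : ℝ)) ω * (Y ω - nuX ω) ^ 2) μ) :
    ∫ ω, (Set.indicator T1ᶜ (fun _ => (1 : ℝ)) ω *
        ((Set.indicator T3 (fun _ => (1 : ℝ)) ω / pi ω) *
            ((Yhat ω - nuX ω) ^ 2 - η ω) + η ω) +
      Set.indicator T1 (fun _ => (1 : ℝ)) ω * (Y ω - nuX ω) ^ 2) ∂μ
      = ∫ ω, (Y1 ω - nuX ω) ^ 2 ∂μ := by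
  haveI : IsFiniteMeasure (μ.trim hXZ) := isFiniteMeasure_trim hXZ
  set I1 := Set.indicator T1 (fun _ => (1 : ℝ)) with hI1def
  set I3 := Set.indicator T3 (fun _ => (1 : ℝ)) with hI3def
  set Ic := Set.indicator T1ᶜ (fun _ => (1 : ℝ)) with hIcdef
  -- abbreviations
  set c : Ω → ℝ := fun ω => I3 ω / pi ω - Ic ω with hcdef
  -- pointwise values of indicators
  have hI1v : ∀ ω, (ω ∈ T1 → I1 ω = 1) ∧ (ω ∉ T1 → I1 ω = 0) := fun ω =>
    ⟨fun h => by simp [hI1def, h], fun h => by simp [hI1def, h]⟩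
  have hI3v : ∀ ω, (ω ∈ T3 → I3 ω = 1) ∧ (ω ∉ T3 → I3 ω = 0) := fun ω =>
    ⟨fun h => by simp [hI3def, h], fun h => by simp [hI3def, h]⟩
  have hIcv : ∀ ω, (ω ∉ T1 → Ic ω = 1) ∧ (ω ∈ T1 → Ic ω = 0) := fun ω =>
    ⟨fun h => by simp [hIcdef, h], fun h => by simp [hIcdef, h]⟩
  -- measurability
  have hT1' : MeasurableSet[m0] T1 := hT1
  have hT3' : MeasurableSet[m0] T3 := hT3
  have hpiM : Measurable[m0] pi := hpim.measurable.mono hXZ le_rfl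
  have hηM : Measurable[m0] η := hηm.measurable.mono hXZ le_rfl
  have hI1M : Measurable[m0] I1 := measurable_const.indicator hT1'
  have hI3M : Measurable[m0] I3 := measurable_const.indicator hT3'
  have hIcM : Measurable[m0] Ic := measurable_const.indicator hT1'.compl
  have hcMeas : Measurable[m0] c := (hI3M.div hpiM).sub hIcM
  have hpiinv_sm : StronglyMeasurable[mXZ] (fun ω => (pi ω)⁻¹) :=
    hpim.measurable.inv.stronglyMeasurable
  -- a.e. bounds
  have hpiinv_bdd : ∀ᵐ ω ∂μ, ‖(pi ω)⁻¹‖ ≤ ε⁻¹ := by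
    filter_upwards [hpos] with ω hω
    have hpi0 : 0 < pi ω := lt_of_lt_of_le hε hω.1
    rw [Real.norm_eq_abs, abs_of_nonneg (inv_nonneg.mpr hpi0.le)]
    exact inv_anti₀ hε hω.1
  have hc_bdd : ∀ᵐ ω ∂μ, ‖c ω‖ ≤ ε⁻¹ + 1 := by
    filter_upwards [hpos] with ω hω
    have hpi0 : 0 < pi ω := lt_of_lt_of_le hε hω.1
    have h3 : 0 ≤ I3 ω ∧ I3 ω ≤ 1 := by
      by_cases h : ω ∈ T3 <;> simp [hI3def, h]
    have hcv : 0 ≤ Ic ω ∧ Ic ω ≤ 1 := by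
      by_cases h : ω ∈ T1 <;> simp [hIcdef, h]
    have hd0 : 0 ≤ I3 ω / pi ω := div_nonneg h3.1 hpi0.le
    have hd1 : I3 ω / pi ω ≤ ε⁻¹ := by
      rw [div_le_iff₀ hpi0]
      calc I3 ω ≤ 1 := h3.2
        _ = ε⁻¹ * ε := by field_simp
        _ ≤ ε⁻¹ * pi ω := by
            exact mul_le_mul_of_nonneg_left hω.1 (inv_nonneg.mpr hε.le)
    calc ‖c ω‖ ≤ ‖I3 ω / pi ω‖ + ‖Ic ω‖ := norm_sub_le _ _
      _ ≤ ε⁻¹ + 1 := by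
          rw [Real.norm_eq_abs, Real.norm_eq_abs, abs_of_nonneg hd0,
            abs_of_nonneg hcv.1]
          exact add_le_add hd1 hcv.2
  -- integrability of various products
  have hI1int : Integrable I1 μ := (integrable_const (1 : ℝ)).mono'
    hI1M.aestronglyMeasurable
    (Filter.Eventually.of_forall fun ω => by by_cases h : ω ∈ T1 <;> simp [hI1def, h])
  have hI3int : Integrable I3 μ := (integrable_const (1 : ℝ)).mono'
    hI3M.aestronglyMeasurable
    (Filter.Eventually.of_forall fun ω => by by_cases h : ω ∈ T3 <;> simp [hI3def, h])
  have hIcint : Integrable Ic μ := (integrable_const (1 : ℝ)).mono'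
    hIcM.aestronglyMeasurable
    (Filter.Eventually.of_forall fun ω => by by_cases h : ω ∈ T1 <;> simp [hIcdef, h])
  have hI1S : Integrable (fun ω => I1 ω * (Y1 ω - nuX ω) ^ 2) μ :=
    hS.bdd_mul hI1M.aestronglyMeasurable
      (c := 1) (Filter.Eventually.of_forall fun ω => by by_cases h : ω ∈ T1 <;> simp [hI1def, h])
  have hI3S : Integrable (fun ω => I3 ω * (Y1 ω - nuX ω) ^ 2) μ :=
    hS.bdd_mul hI3M.aestronglyMeasurable
      (c := 1) (Filter.Eventually.of_forall fun ω => by by_cases h : ω ∈ T3 <;> simp [hI3def, h])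
  have hAint : Integrable ((fun ω => (pi ω)⁻¹) * fun ω => I3 ω * (Y1 ω - nuX ω) ^ 2) μ :=
    hI3S.bdd_mul (hpiM.inv.aestronglyMeasurable) hpiinv_bdd
  have hpiinvI3int : Integrable ((fun ω => (pi ω)⁻¹) * I3) μ :=
    hI3int.bdd_mul (hpiM.inv.aestronglyMeasurable) hpiinv_bdd
  have hcint : Integrable c μ :=
    (integrable_const (ε⁻¹ + 1)).mono' hcMeas.aestronglyMeasurable
      (by filter_upwards [hc_bdd] with ω h; simpa using h)
  have hcS : Integrable (fun ω => c ω * (Y1 ω - nuX ω) ^ 2) μ :=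
    hS.bdd_mul hcMeas.aestronglyMeasurable hc_bdd
  -- a.e. identity: φ = S + c·S − c·η
  have hae : (fun ω => Ic ω * ((I3 ω / pi ω) * ((Yhat ω - nuX ω) ^ 2 - η ω) + η ω) +
        I1 ω * (Y ω - nuX ω) ^ 2)
      =ᵐ[μ] fun ω => (Y1 ω - nuX ω) ^ 2 + c ω * (Y1 ω - nuX ω) ^ 2 - c ω * η ω := by
    filter_upwards [hcons1, hcons3] with ω h1 h3
    simp only [hcdef]
    by_cases hm3 : ω ∈ T3
    · have hm1 : ω ∉ T1 := fun h => (Set.disjoint_left.mp hdisj h) hm3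
      rw [(hI3v ω).1 hm3, (hIcv ω).1 hm1, (hI1v ω).2 hm1, h3 hm3]
      ring
    · rw [(hI3v ω).2 hm3]
      by_cases hm1 : ω ∈ T1
      · rw [(hIcv ω).2 hm1, (hI1v ω).1 hm1, h1 hm1]; ring
      · rw [(hIcv ω).1 hm1, (hI1v ω).2 hm1]; ring
  -- integrability of c·η
  have hcη : Integrable (fun ω => c ω * η ω) μ := by
    have h1 : Integrable (fun ω => c ω * ((Y1 ω - nuX ω) ^ 2 - η ω)) μ := by
      refine ((hφ.sub hS).congr ?_)
      filter_upwards [hae] with ω h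
      simp only [Pi.sub_apply]
      rw [h]; ring
    refine (hcS.sub h1).congr ?_
    refine Filter.Eventually.of_forall fun ω => ?_
    simp only [Pi.sub_apply]
    ring
  -- conditional expectation of c is 0
  have hEc : (μ[c | mXZ]) =ᵐ[μ] 0 := by
    have hsplit : c = (fun ω => (pi ω)⁻¹) * I3 - Ic := by
      funext ω; simp only [hcdef, Pi.sub_apply, Pi.mul_apply]; ring
    rw [hsplit]
    calc μ[(fun ω => (pi ω)⁻¹) * I3 - Ic | mXZ]
        =ᵐ[μ] μ[(fun ω => (pi ω)⁻¹) * I3 | mXZ] - μ[Ic | mXZ] :=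
          condExp_sub hpiinvI3int hIcint mXZ
      _ =ᵐ[μ] (fun ω => (pi ω)⁻¹) * μ[I3 | mXZ] - μ[Ic | mXZ] :=
          (condExp_mul_of_stronglyMeasurable_left hpiinv_sm hpiinvI3int hI3int).sub
            Filter.EventuallyEq.rfl
      _ =ᵐ[μ] 0 := by
          filter_upwards [hpidef, hpos] with ω hq hω
          have hpi0 : pi ω ≠ 0 := (lt_of_lt_of_le hε hω.1).ne'
          simp only [Pi.sub_apply, Pi.mul_apply, Pi.zero_apply]
          rw [hq]
          field_simp
          ring
  -- π·pc = q lets us cancel; also pc = 1 - p1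
  have hpc : (μ[Ic | mXZ]) =ᵐ[μ] fun ω => 1 - (μ[I1 | mXZ]) ω := by
    have hIceq : Ic = (fun _ => (1 : ℝ)) - I1 := by
      funext ω
      by_cases h : ω ∈ T1
      · simp [Pi.sub_apply, (hIcv ω).2 h, (hI1v ω).1 h]
      · simp [Pi.sub_apply, (hIcv ω).1 h, (hI1v ω).2 h]
    rw [hIceq]
    calc μ[(fun _ => (1 : ℝ)) - I1 | mXZ]
        =ᵐ[μ] μ[fun _ => (1 : ℝ) | mXZ] - μ[I1 | mXZ] :=
          condExp_sub (integrable_const 1) hI1int mXZ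
      _ =ᵐ[μ] fun ω => 1 - (μ[I1 | mXZ]) ω := by
          rw [condExp_const hXZ]
          exact Filter.Eventually.of_forall fun ω => by simp
  -- conditional expectation of c·S is 0
  have hEcS : (μ[fun ω => c ω * (Y1 ω - nuX ω) ^ 2 | mXZ]) =ᵐ[μ] 0 := by
    have hsplit : (fun ω => c ω * (Y1 ω - nuX ω) ^ 2)
        = (fun ω => (pi ω)⁻¹) * (fun ω => I3 ω * (Y1 ω - nuX ω) ^ 2) -
          ((fun ω => (Y1 ω - nuX ω) ^ 2) - fun ω => I1 ω * (Y1 ω - nuX ω) ^ 2) := by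
      funext ω
      have hIcval : Ic ω = 1 - I1 ω := by
        by_cases h : ω ∈ T1
        · rw [(hIcv ω).2 h, (hI1v ω).1 h]; ring
        · rw [(hIcv ω).1 h, (hI1v ω).2 h]; ring
      simp only [hcdef, Pi.sub_apply, Pi.mul_apply, hIcval]; ring
    rw [hsplit]
    calc μ[(fun ω => (pi ω)⁻¹) * (fun ω => I3 ω * (Y1 ω - nuX ω) ^ 2) -
          ((fun ω => (Y1 ω - nuX ω) ^ 2) - fun ω => I1 ω * (Y1 ω - nuX ω) ^ 2) | mXZ]
        =ᵐ[μ] μ[(fun ω => (pi ω)⁻¹) * fun ω => I3 ω * (Y1 ω - nuX ω) ^ 2 | mXZ] -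
          μ[(fun ω => (Y1 ω - nuX ω) ^ 2) - fun ω => I1 ω * (Y1 ω - nuX ω) ^ 2 | mXZ] :=
          condExp_sub hAint (hS.sub hI1S) mXZ
      _ =ᵐ[μ] (fun ω => (pi ω)⁻¹) * μ[fun ω => I3 ω * (Y1 ω - nuX ω) ^ 2 | mXZ] -
          (μ[fun ω => (Y1 ω - nuX ω) ^ 2 | mXZ] -
            μ[fun ω => I1 ω * (Y1 ω - nuX ω) ^ 2 | mXZ]) :=
          (condExp_mul_of_stronglyMeasurable_left hpiinv_sm hAint hI3S).sub
            (condExp_sub hS hI1S mXZ)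
      _ =ᵐ[μ] 0 := by
          filter_upwards [hig1, hig3, hpidef, hpc, hpos] with ω h1 h3 hq hpcω hω
          have hpi0 : pi ω ≠ 0 := (lt_of_lt_of_le hε hω.1).ne'
          simp only [Pi.sub_apply, Pi.mul_apply, Pi.zero_apply]
          rw [h3, h1, hq, hpcω]
          field_simp
          ring
  -- the two correction integrals vanish
  have hintcS : ∫ ω, c ω * (Y1 ω - nuX ω) ^ 2 ∂μ = 0 := by
    rw [← integral_condExp hXZ (f := fun ω => c ω * (Y1 ω - nuX ω) ^ 2),
      integral_congr_ae hEcS]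
    simp
  have hintcη : ∫ ω, c ω * η ω ∂μ = 0 := by
    have hηc : Integrable (η * c) μ :=
      hcη.congr (Filter.Eventually.of_forall fun ω => mul_comm _ _)
    have hpull := condExp_mul_of_stronglyMeasurable_left hηm hηc hcint
    have hzero : (μ[fun ω => c ω * η ω | mXZ]) =ᵐ[μ] 0 := by
      have h1 : (μ[fun ω => c ω * η ω | mXZ]) =ᵐ[μ] μ[η * c | mXZ] :=
        condExp_congr_ae (Filter.Eventually.of_forall fun ω => mul_comm _ _)
      refine h1.trans (hpull.trans ?_)
      filter_upwards [hEc] with ω h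
      simp only [Pi.mul_apply, Pi.zero_apply] at *
      rw [h, mul_zero]
    rw [← integral_condExp hXZ (f := fun ω => c ω * η ω), integral_congr_ae hzero]
    simp
  rw [integral_congr_ae hae,
    integral_sub (f := fun ω => (Y1 ω - nuX ω) ^ 2 + c ω * (Y1 ω - nuX ω) ^ 2)
      (g := fun ω => c ω * η ω) (hS.add hcS) hcη,
    integral_add hS hcS, hintcS, hintcη]
  ring
end
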